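/- Let R be a commutative ring with a quasi-valuation e, and \(R^\dagger=\{f\in R: e(fg)=e(f)+e(g)\ \forall g\in R\}\). Let \(\mathcal P=\sum_{k=0}^n\mathcal P_kY^k\in R[Y]\) with \(\mathcal P_n=1\). If \(\mathcal P\) has n roots in R (counted with multiplicities, i.e., \(\mathcal P\) splits as \(\prod_i(Y-\mathcal Y_i)\)) and all roots belong to \(R^\dagger\), then the multiset \((e(\mathcal Y_1),\ldots,e(\mathcal Y_n))\) equals the multiset of tropical roots of the min-plus polynomial \(\bigoplus_{k=0}^n e(\mathcal P_k)Y^k\). -/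

import Mathlib

/-!
Induct on the number of roots. Multiplying `q` by `X - a` gives coefficients `q_{k-1} - a q_k`,
so the ultrametric inequality bounds the new tropical polynomial from below by
`trop(q)(y) + min(y, e a)`. For the reverse bound take the largest index `k` at which
`min_k (e(q_k) + k y)` is attained: if `y ≤ e a`, coefficient `k + 1` has valuation exactly
`e(q_k)`, and otherwise coefficient `k` has valuation exactly `e a + e(q_k)`: the maximality
of `k` makes one of the two terms strictly dominant, `a ∈ R†` makes `e(a q_j) = e a + e(q_j)`,
and `e(f - g) = e f` whenever `e f < e g`. Hence the tropical polynomial of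
`∏ (X - Y_i)` is `∑ min(y, e(Y_i))`, whose tropical roots are the `e(Y_i)`.
-/

open scoped Classical

/-- The min-plus polynomial function `ŷ ↦ min_{0 ≤ k ≤ n} (P_k + k y)`. -/
noncomputable def tropEval (P : ℕ → WithTop ℝ) (n : ℕ) (y : ℝ) : WithTop ℝ :=
  (Finset.range (n + 1)).inf fun k => P k + (((k : ℝ) * y : ℝ) : WithTop ℝ)

open Polynomial

structure IsQuasiValuation {R Γ : Type*} [Ring R] [AddCommMonoid Γ] [LinearOrder Γ]
    (e : R → Γ) : Prop where
  min_le_add : ∀ f g, min (e f) (e g) ≤ e (f + g)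
  add_le_mul : ∀ f g, e f + e g ≤ e (f * g)
  neg_one : e (-1) = 0

def daggerSet {R Γ : Type*} [Mul R] [Add Γ] (e : R → Γ) : Set R :=
  {f | ∀ g, e (f * g) = e f + e g}

namespace IsQuasiValuation

variable {R Γ : Type*} [Ring R] [AddCommMonoid Γ] [LinearOrder Γ] {e : R → Γ}

theorem map_one (he : IsQuasiValuation e) : e 1 = 0 := by
  apply le_antisymm
  · simpa [he.neg_one] using he.add_le_mul 1 (-1)
  · simpa [he.neg_one] using he.add_le_mul (-1) (-1)

theorem map_neg (he : IsQuasiValuation e) (f : R) : e (-f) = e f := by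
  have le_neg : ∀ g : R, e g ≤ e (-g) := fun g => by
    simpa [he.neg_one] using he.add_le_mul (-1) g
  exact le_antisymm (by simpa using le_neg (-f)) (le_neg f)

theorem min_le_sub (he : IsQuasiValuation e) (f g : R) : min (e f) (e g) ≤ e (f - g) := by
  simpa [sub_eq_add_neg, he.map_neg] using he.min_le_add f (-g)

theorem map_add_of_lt (he : IsQuasiValuation e) {f g : R} (h : e f < e g) :
    e (f + g) = e f := by
  refine le_antisymm ?_ (by simpa [h.le] using he.min_le_add f g)
  by_contra! hlt
  have := he.min_le_add (f + g) (-g)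
  rw [he.map_neg, add_neg_cancel_right] at this
  exact this.not_gt (lt_min hlt h)

theorem map_sub_of_lt (he : IsQuasiValuation e) {f g : R} (h : e f < e g) :
    e (f - g) = e f := by
  rw [sub_eq_add_neg]
  exact he.map_add_of_lt (by rwa [he.map_neg])

theorem map_sub_of_gt (he : IsQuasiValuation e) {f g : R} (h : e g < e f) :
    e (f - g) = e g := by
  rw [← neg_sub, he.map_neg]
  exact he.map_sub_of_lt h

end IsQuasiValuation

section Tropical

variable (P : ℕ → WithTop ℝ) (n : ℕ) (y : ℝ)

theorem tropEval_le {k : ℕ} (hk : k ≤ n) :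
    tropEval P n y ≤ P k + (((k : ℝ) * y : ℝ) : WithTop ℝ) :=
  Finset.inf_le (Finset.mem_range.2 (Nat.lt_succ_of_le hk))

theorem exists_max_tropEval_eq :
    ∃ k ≤ n, P k + (((k : ℝ) * y : ℝ) : WithTop ℝ) = tropEval P n y ∧
      ∀ j ≤ n, k < j → tropEval P n y < P j + (((j : ℝ) * y : ℝ) : WithTop ℝ) := by
  set term : ℕ → WithTop ℝ := fun k => P k + (((k : ℝ) * y : ℝ) : WithTop ℝ)
  obtain ⟨k₁, hk₁, hk₁eq⟩ := Finset.exists_mem_eq_inf (Finset.range (n + 1))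
    ⟨0, Finset.mem_range.2 n.succ_pos⟩ term
  set S := (Finset.range (n + 1)).filter fun j => term j = tropEval P n y
  have hS : S.Nonempty := ⟨k₁, Finset.mem_filter.2 ⟨hk₁, hk₁eq.symm⟩⟩
  obtain ⟨hmem, heq⟩ := Finset.mem_filter.1 (S.max'_mem hS)
  refine ⟨S.max' hS, Nat.lt_succ_iff.1 (Finset.mem_range.1 hmem), heq, fun j hj hlt => ?_⟩
  refine (tropEval_le P n y hj).lt_of_ne fun h => hlt.not_ge (S.le_max' j ?_)
  exact Finset.mem_filter.2 ⟨Finset.mem_range.2 (Nat.lt_succ_of_le hj), h.symm⟩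

end Tropical

theorem coe_natCast_succ_mul (k : ℕ) (y : ℝ) :
    ((((k + 1 : ℕ) : ℝ) * y : ℝ) : WithTop ℝ) = (((k : ℝ) * y : ℝ) : WithTop ℝ) + y := by
  rw [← WithTop.coe_add]
  congr 1
  push_cast
  ring

section MulXSubC

variable {R : Type*} [CommRing R] {e : R → WithTop ℝ} (he : IsQuasiValuation e)
  {q : R[X]} {n : ℕ} (hq : q.natDegree ≤ n) (a : R) (y : ℝ)
include he hq

theorem tropEval_add_min_le_coeff_mul_X_sub_C {k : ℕ} (hk : k ≤ n + 1) :
    tropEval (fun k => e (q.coeff k)) n y + min (y : WithTop ℝ) (e a) ≤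
      e ((q * (X - C a)).coeff k) + (((k : ℝ) * y : ℝ) : WithTop ℝ) := by
  set T := tropEval (fun k => e (q.coeff k)) n y
  rcases k with _ | k
  · calc T + min (y : WithTop ℝ) (e a)
        ≤ e (q.coeff 0) + (((0 : ℕ) : ℝ) * y : ℝ) + e (-a) := by
          rw [he.map_neg]; exact add_le_add (tropEval_le _ n y (Nat.zero_le n)) (min_le_right _ _)
      _ ≤ _ := by
          rw [mul_coeff_zero, add_right_comm]
          simpa using he.add_le_mul (q.coeff 0) (-a)
  rw [coeff_mul_X_sub_C, coe_natCast_succ_mul]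
  rcases (Nat.lt_succ_iff.1 hk).lt_or_eq with hk | rfl
  · calc T + min (y : WithTop ℝ) (e a)
        = min (T + y) (T + e a) := (min_add_add_left _ _ _).symm
      _ ≤ min (e (q.coeff k) + (k * y : ℝ) + y)
            (e (q.coeff (k + 1)) + (((k + 1 : ℕ) : ℝ) * y : ℝ) + e a) :=
          min_le_min (add_le_add (tropEval_le _ n y hk.le) le_rfl)
            (add_le_add (tropEval_le _ n y hk) le_rfl)
      _ = min (e (q.coeff k)) (e (q.coeff (k + 1)) + e a) + ((k * y : ℝ) + y) := by
          rw [coe_natCast_succ_mul, ← min_add_add_right]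
          congr 1 <;> ac_rfl
      _ ≤ _ := by
          gcongr
          exact (min_le_min le_rfl (he.add_le_mul _ _)).trans (he.min_le_sub _ _)
  · rw [coeff_eq_zero_of_natDegree_lt (Nat.lt_succ_of_le hq), zero_mul, sub_zero, ← add_assoc]
    exact add_le_add (tropEval_le _ _ y le_rfl) (min_le_left _ _)

theorem exists_coeff_mul_X_sub_C_le (ha : a ∈ daggerSet e) :
    ∃ k ≤ n + 1, e ((q * (X - C a)).coeff k) + (((k : ℝ) * y : ℝ) : WithTop ℝ) ≤
      tropEval (fun k => e (q.coeff k)) n y + min (y : WithTop ℝ) (e a) := by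
  obtain ⟨k, hkn, hkT, hk_lt⟩ := exists_max_tropEval_eq (fun k => e (q.coeff k)) n y
  set T := tropEval (fun k => e (q.coeff k)) n y
  by_cases hTtop : T = ⊤
  · exact ⟨0, Nat.zero_le _, by simp [hTtop]⟩
  have hmul : ∀ j, e (q.coeff j * a) = e a + e (q.coeff j) := fun j => by
    rw [mul_comm]; exact ha _
  rcases le_or_gt (y : WithTop ℝ) (e a) with hya | hay
  · -- Past the last minimiser `k`, the term `q_{k+1} a` is strictly dominated.
    refine ⟨k + 1, by omega, le_of_eq ?_⟩
    rw [min_eq_left hya, coeff_mul_X_sub_C, coe_natCast_succ_mul, ← add_assoc, ← hkT]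
    congr 2
    rcases hkn.lt_or_eq with hkn | rfl
    · refine he.map_sub_of_lt <|
        (WithTop.add_lt_add_iff_right (WithTop.coe_ne_top (a := (k + 1 : ℕ) * y))).1 ?_
      calc e (q.coeff k) + (((k + 1 : ℕ) : ℝ) * y : ℝ) = T + y := by
            rw [coe_natCast_succ_mul, ← add_assoc, hkT]
        _ < (e (q.coeff (k + 1)) + (((k + 1 : ℕ) : ℝ) * y : ℝ)) + y :=
            WithTop.add_lt_add_right WithTop.coe_ne_top (hk_lt _ hkn k.lt_succ_self)
        _ ≤ (e (q.coeff (k + 1)) + (((k + 1 : ℕ) : ℝ) * y : ℝ)) + e a := by gcongr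
        _ = _ := by rw [hmul]; ac_rfl
    · rw [coeff_eq_zero_of_natDegree_lt (Nat.lt_succ_of_le hq), zero_mul, sub_zero]
  · -- At the last minimiser `k`, the term `q_k a` strictly dominates.
    refine ⟨k, by omega, le_of_eq ?_⟩
    rw [min_eq_right hay.le, ← hkT]
    rcases k with _ | j
    · simp [mul_comm, ha (q.coeff 0), he.map_neg, add_comm]
    have hlt : e (q.coeff (j + 1) * a) < e (q.coeff j) := by
      refine (WithTop.add_lt_add_iff_right (WithTop.coe_ne_top (a := (j + 1 : ℕ) * y))).1 ?_
      calc e (q.coeff (j + 1) * a) + (((j + 1 : ℕ) : ℝ) * y : ℝ) = e a + T := by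
            rw [hmul, add_assoc, hkT]
        _ < y + T := WithTop.add_lt_add_right hTtop hay
        _ ≤ y + (e (q.coeff j) + (j * y : ℝ)) := by
            gcongr; exact tropEval_le _ n y (by omega)
        _ = _ := by rw [coe_natCast_succ_mul]; ac_rfl
    rw [coeff_mul_X_sub_C, he.map_sub_of_gt hlt, hmul]
    ac_rfl

theorem tropEval_coeff_mul_X_sub_C (ha : a ∈ daggerSet e) :
    tropEval (fun k => e ((q * (X - C a)).coeff k)) (n + 1) y =
      tropEval (fun k => e (q.coeff k)) n y + min (y : WithTop ℝ) (e a) := by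
  refine le_antisymm ?_ (Finset.le_inf fun k hk =>
    tropEval_add_min_le_coeff_mul_X_sub_C he hq a y (Nat.lt_succ_iff.1 (Finset.mem_range.1 hk)))
  obtain ⟨k, hk, hle⟩ := exists_coeff_mul_X_sub_C_le he hq a y ha
  exact (tropEval_le _ _ y hk).trans hle

end MulXSubC

theorem tropEval_coeff_prod_X_sub_C {R : Type*} [CommRing R] {e : R → WithTop ℝ}
    (he : IsQuasiValuation e) {n : ℕ} (Y : Fin n → R) (hY : ∀ i, Y i ∈ daggerSet e) (y : ℝ) :
    tropEval (fun k => e ((∏ i, (X - C (Y i))).coeff k)) n y =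
      ∑ i, min (y : WithTop ℝ) (e (Y i)) := by
  induction n with
  | zero => simp [tropEval, he.map_one]
  | succ n ih =>
    have hdeg : (∏ i : Fin n, (X - C (Y i.castSucc))).natDegree ≤ n :=
      (natDegree_prod_le _ _).trans <|
        (Finset.sum_le_sum fun i _ => natDegree_X_sub_C_le _).trans (by simp)
    rw [Fin.prod_univ_castSucc, Fin.sum_univ_castSucc,
      tropEval_coeff_mul_X_sub_C he hdeg _ y (hY _), ih _ fun i => hY _]

/-- If a polynomial over a commutative ring with a quasi-valuation `e` has
leading coefficient `1` and splits with all roots in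
`R† = {f : e(fg) = e(f) + e(g) for all g}`, then the multiset of images by `e`
of the roots equals the multiset of tropical roots of `⊕ₖ e(𝒫ₖ) Yᵏ`. -/
theorem stmt_10 {R : Type*} [CommRing R] (e : R → WithTop ℝ)
    (he_add : ∀ f g, min (e f) (e g) ≤ e (f + g))
    (he_mul : ∀ f g, e f + e g ≤ e (f * g))
    (he_neg : e (-1) = 0)
    (n : ℕ) (p : Polynomial R) (hlead : p.coeff n = 1)
    (Y : Fin n → R)
    (hsplit : p = ∏ i : Fin n, (Polynomial.X - Polynomial.C (Y i)))
    (hdag : ∀ i, ∀ g : R, e (Y i * g) = e (Y i) + e g) :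
    ∃ c : Fin n → WithTop ℝ, Monotone c ∧
      (∀ y : ℝ, tropEval (fun k => e (p.coeff k)) n y =
        e (p.coeff n) + ∑ i : Fin n, min (y : WithTop ℝ) (c i)) ∧
      (↑((List.ofFn Y).map e) : Multiset (WithTop ℝ)) =
        (↑(List.ofFn c) : Multiset (WithTop ℝ)) := by
  have he : IsQuasiValuation e := ⟨he_add, he_mul, he_neg⟩
  set f : Fin n → WithTop ℝ := fun i => e (Y i)
  refine ⟨f ∘ Tuple.sort f, Tuple.monotone_sort f, fun y => ?_, ?_⟩
  · rw [hlead, he.map_one, zero_add, hsplit, tropEval_coeff_prod_X_sub_C he Y hdag]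
    exact (Equiv.sum_comp (Tuple.sort f) fun i => min (y : WithTop ℝ) (f i)).symm
  · rw [List.map_ofFn]
    exact (Multiset.coe_eq_coe.2 (Equiv.Perm.ofFn_comp_perm (Tuple.sort f) f)).symm
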